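/- Let g ≥ 1 and n ≥ 1, and let 1 ≤ i ≤ n. Then in the group PG(g,0,n): y_1 F_i y_1⁻¹ = B_1⁻¹ F_i (the verification of relation (PT3) in the proof of Proposition 3.3). -/

import Mathlib

namespace LabruereParisP

/-- `altWord a b m` is the alternating word `prod(a,b,m) = abab⋯` of length `m`. -/
def altWord {α : Type*} (a b : α) : ℕ → FreeGroup α
  | 0 => 1
  | k + 1 => FreeGroup.of a * altWord b a k

/-- The vertex set of the Coxeter graph `PΓ_{g,0,n}`: `Sum.inl i` is `x_i`
(`0 ≤ i ≤ n`), `Sum.inr (Sum.inl j)` is `y_{j+1}` (`1 ≤ j+1 ≤ 2g-1`), and the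
`Unit` vertex is `z`. -/
abbrev S (g n : ℕ) := Fin (n + 1) ⊕ Fin (2 * g - 1) ⊕ Unit

/-- The Coxeter matrix of `PΓ_{g,0,n}`: `m(x_i,y_1) = 3`, `m(y_j,y_{j+1}) = 3`,
`m(z,y_3) = 3`, and label `2` for every other pair of distinct vertices. -/
def cox (g n : ℕ) : S g n → S g n → ℕ
  | Sum.inl _, Sum.inr (Sum.inl j) => if (j : ℕ) = 0 then 3 else 2
  | Sum.inr (Sum.inl j), Sum.inl _ => if (j : ℕ) = 0 then 3 else 2
  | Sum.inr (Sum.inl j), Sum.inr (Sum.inl k) =>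
      if j = k then 1 else if (j : ℕ) + 1 = (k : ℕ) ∨ (k : ℕ) + 1 = (j : ℕ) then 3 else 2
  | Sum.inr (Sum.inr ()), Sum.inr (Sum.inl j) => if (j : ℕ) = 2 then 3 else 2
  | Sum.inr (Sum.inl j), Sum.inr (Sum.inr ()) => if (j : ℕ) = 2 then 3 else 2
  | a, b => if a = b then 1 else 2

/-- The generator `x_i` of the free group (`0 ≤ i ≤ n`; junk value `1` out of range). -/
def fx (g n i : ℕ) : FreeGroup (S g n) :=
  if h : i < n + 1 then FreeGroup.of (Sum.inl ⟨i, h⟩) else 1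

/-- The generator `y_j` (`1 ≤ j ≤ 2g-1`; junk value `1` out of range). -/
def fy (g n j : ℕ) : FreeGroup (S g n) :=
  if h : 1 ≤ j ∧ j ≤ 2 * g - 1 then FreeGroup.of (Sum.inr (Sum.inl ⟨j - 1, by omega⟩)) else 1

/-- The generator `z`. -/
def fz (g n : ℕ) : FreeGroup (S g n) := FreeGroup.of (Sum.inr (Sum.inr ()))

/-- The Artin relators of `PΓ_{g,0,n}`. -/
def artinRels (g n : ℕ) : Set (FreeGroup (S g n)) :=
  {w | ∃ a b : S g n, a ≠ b ∧
      w = altWord a b (cox g n a b) * (altWord b a (cox g n a b))⁻¹}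

/-- `W(i,j) = (x_jy_1x_{i+1}x_jy_1x_j)⁻¹ · x_i · (x_jy_1x_{i+1}x_jy_1x_j)`. -/
def Wrel (g n i j : ℕ) : FreeGroup (S g n) :=
  (fx g n j * fy g n 1 * fx g n (i + 1) * fx g n j * fy g n 1 * fx g n j)⁻¹ *
    fx g n i *
    (fx g n j * fy g n 1 * fx g n (i + 1) * fx g n j * fy g n 1 * fx g n j)

/-- The relators (PR1)–(PR6) of Proposition 3.3 of Labruère–Paris. -/
def prRels (g n : ℕ) : Set (FreeGroup (S g n)) :=
  {w |
    -- (PR1)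
    (2 ≤ g ∧ w = (fy g n 1 * fy g n 2 * fy g n 3 * fz g n) ^ 10 *
        ((fx g n 0 * fy g n 1 * fy g n 2 * fy g n 3 * fz g n) ^ 6)⁻¹) ∨
    -- (PR2)
    (3 ≤ g ∧ w = (fy g n 1 * fy g n 2 * fy g n 3 * fz g n * fy g n 4 * fy g n 5) ^ 12 *
        ((fx g n 0 * fy g n 1 * fy g n 2 * fy g n 3 * fz g n *
          fy g n 4 * fy g n 5) ^ 9)⁻¹) ∨
    -- (PR3)
    (∃ i j k : ℕ, k < j ∧ j < i ∧ i ≤ n - 1 ∧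
        w = fx g n k * Wrel g n i j * (Wrel g n i j * fx g n k)⁻¹) ∨
    -- (PR4)
    (2 ≤ g ∧ ∃ i j : ℕ, j < i ∧ i ≤ n - 1 ∧
        w = fy g n 2 * Wrel g n i j * (Wrel g n i j * fy g n 2)⁻¹) ∨
    -- (PR5)
    (2 ≤ g ∧ w = (fx g n 0 * fx g n 1 * fy g n 1 * fy g n 2 * fy g n 3 * fz g n) ^ 5 *
        ((fx g n 1 * fy g n 1 * fy g n 2 * fy g n 3 * fz g n) ^ 6)⁻¹) ∨
    -- (PR6)
    (2 ≤ g ∧ ∃ i : ℕ, 1 ≤ i ∧ i ≤ n - 1 ∧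
        w = (fx g n i * fx g n (i + 1) * fy g n 1 * fy g n 2 * fy g n 3 * fz g n) ^ 5 *
          ((fx g n (i + 1) * fy g n 1 * fy g n 2 * fy g n 3 * fz g n) ^ 6)⁻¹ *
          ((fx g n 0 * fx g n i * fy g n 1 * fx g n (i + 1)) ^ 3 *
            ((fx g n 0 * fy g n 1 * fx g n (i + 1)) ^ 4)⁻¹)⁻¹)}

/-- The group `PG(g,0,n)` of Proposition 3.3: the quotient of `A(PΓ_{g,0,n})`
by the relations (PR1)–(PR6). -/
abbrev PG (g n : ℕ) := PresentedGroup (artinRels g n ∪ prRels g n)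

/-- The image of `x_i` in `PG(g,0,n)`. -/
def X (g n i : ℕ) : PG g n := PresentedGroup.mk _ (fx g n i)

/-- The image of `y_j` in `PG(g,0,n)`. -/
def Y (g n j : ℕ) : PG g n := PresentedGroup.mk _ (fy g n j)

/-- The image of `z` in `PG(g,0,n)`. -/
def Z (g n : ℕ) : PG g n := PresentedGroup.mk _ (fz g n)

/-- `Δ(z_1,…,z_m) = (z_1⋯z_m)(z_1⋯z_{m-1})⋯(z_1z_2)z_1`. -/
def deltaList {G : Type*} [Group G] (zs : List G) : G :=
  (((List.range zs.length).reverse).map fun k => (zs.take (k + 1)).prod).prod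

/-- `F_i = f(α_i)` (`1 ≤ i ≤ n`): for `i = n`, `F_n = x_{n-1}⁻¹x_n`; for
`1 ≤ i ≤ n-1`,
`F_i = x_{n-1}⁻¹·(x_{i-1}y_1x_nx_{i-1}y_1x_{i-1})⁻¹·x_n⁻¹x_{n-1}·(x_{i-1}y_1x_nx_{i-1}y_1x_{i-1})·x_{n-1}`. -/
def F (g n i : ℕ) : PG g n :=
  if i = n then (X g n (n - 1))⁻¹ * X g n n
  else
    (X g n (n - 1))⁻¹ *
      (X g n (i - 1) * Y g n 1 * X g n n * X g n (i - 1) * Y g n 1 * X g n (i - 1))⁻¹ *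
      (X g n n)⁻¹ * X g n (n - 1) *
      (X g n (i - 1) * Y g n 1 * X g n n * X g n (i - 1) * Y g n 1 * X g n (i - 1)) *
      X g n (n - 1)

/-- `B_i = f(β_i) = Δ(x_{n-1},y_1,…,y_i)⁻¹ · x_{n-1}⁻¹x_n · Δ(x_{n-1},y_1,…,y_i)`
(`1 ≤ i ≤ 2g-1`). -/
def B (g n i : ℕ) : PG g n :=
  (deltaList (X g n (n - 1) :: (List.range i).map fun k => Y g n (k + 1)))⁻¹ *
    (X g n (n - 1))⁻¹ * X g n n *
    deltaList (X g n (n - 1) :: (List.range i).map fun k => Y g n (k + 1))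

end LabruereParisP

/-
Write `a = x_{n-1}`, `b = y_1`, `c = x_n`, `d = x_{i-1}`; only the Artin relations are needed:
`b` braids with `a`, `c`, `d`, which commute pairwise. The relation is equivalent to
`B_1 = ⁅F_i, b⁆`.
For `i = n`, `F_n = a⁻¹c` and `⁅a⁻¹c, b⁆ = (aba)⁻¹(a⁻¹c)(aba)` is a short braid computation.
For `i < n`, `F_i = a⁻¹c · W⁻¹H` with `W = db(cd)bd` and `H = ab(cd)ba`; both are of the form
`pb·y·bp` with `p` braiding with `b` and commuting with `y`, hence commute with `b`, so
`⁅F_i, b⁆ = ⁅a⁻¹c, b⁆` as well.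
-/

open scoped commutatorElement

namespace LabruereParisP

section BraidRelations

variable {G : Type*} [Group G] {a b c d p q r y : G}

theorem inv_mul_mul_of_braid (h : a * b * a = b * a * b) : a⁻¹ * b * a = b * a * b⁻¹ :=
  calc a⁻¹ * b * a = a⁻¹ * (b * a * b) * b⁻¹ := by group
    _ = a⁻¹ * (a * b * a) * b⁻¹ := by rw [h]
    _ = b * a * b⁻¹ := by group

theorem commutatorElement_inv_mul_of_braid (hab : a * b * a = b * a * b)
    (hcb : c * b * c = b * c * b) (hac : Commute a c) :
    ⁅a⁻¹ * c, b⁆ = (a * b * a)⁻¹ * a⁻¹ * c * (a * b * a) :=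
  calc ⁅a⁻¹ * c, b⁆ = a⁻¹ * (c * b * c⁻¹) * a * b⁻¹ := by rw [commutatorElement_def]; group
    _ = a⁻¹ * (b⁻¹ * c * b) * a * b⁻¹ := by rw [inv_mul_mul_of_braid hcb.symm]
    _ = a⁻¹ * b⁻¹ * c * (b * a * b⁻¹) := by group
    _ = a⁻¹ * b⁻¹ * c * (a⁻¹ * b * a) := by rw [inv_mul_mul_of_braid hab]
    _ = a⁻¹ * b⁻¹ * (c * a⁻¹) * b * a := by group
    _ = a⁻¹ * b⁻¹ * (a⁻¹ * (a⁻¹ * c * a)) * b * a := by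
          rw [hac.inv_mul_cancel, hac.inv_left.eq]
    _ = (a * b * a)⁻¹ * a⁻¹ * c * (a * b * a) := by group

theorem commute_sandwich_of_braid (hpb : p * b * p = b * p * b) (hpy : Commute p y) :
    Commute b (p * b * y * b * p) :=
  calc b * (p * b * y * b * p) = (b * p * b) * y * b * p := by group
    _ = (p * b * p) * y * b * p := by rw [hpb]
    _ = p * b * (p * y) * b * p := by group
    _ = p * b * (y * p) * b * p := by rw [hpy.eq]
    _ = p * b * y * (p * b * p) := by group
    _ = p * b * y * (b * p * b) := by rw [hpb]
    _ = p * b * y * b * p * b := by group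

theorem sandwich_mul_of_braid (hqb : q * b * q = b * q * b) (hrb : r * b * r = b * r * b)
    (hpq : Commute p q) (hpr : Commute p r) :
    p * b * (q * r) * b * p * r = q * (p * b * (q * r) * b * p) :=
  calc p * b * (q * r) * b * p * r = p * b * q * r * b * (p * r) := by group
    _ = p * b * q * (r * b * r) * p := by rw [hpr.eq]; group
    _ = p * b * q * (b * r * b) * p := by rw [hrb]
    _ = p * (b * q * b) * r * b * p := by group
    _ = p * (q * b * q) * r * b * p := by rw [hqb]
    _ = (p * q) * b * q * r * b * p := by group
    _ = (q * p) * b * q * r * b * p := by rw [hpq.eq]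
    _ = q * (p * b * (q * r) * b * p) := by group

theorem commutatorElement_mul_of_commute {x k : G} (h : Commute k b) : ⁅x * k, b⁆ = ⁅x, b⁆ :=
  calc ⁅x * k, b⁆ = x * (k * b * k⁻¹) * x⁻¹ * b⁻¹ := by rw [commutatorElement_def]; group
    _ = ⁅x, b⁆ := by rw [h.mul_inv_cancel, commutatorElement_def]

theorem commutatorElement_inv_mul_conj_of_braid (hab : a * b * a = b * a * b)
    (hcb : c * b * c = b * c * b) (hdb : d * b * d = b * d * b)
    (hac : Commute a c) (had : Commute a d) (hcd : Commute c d) :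
    ⁅a⁻¹ * (d * b * c * d * b * d)⁻¹ * c⁻¹ * a * (d * b * c * d * b * d) * a, b⁆ =
      ⁅a⁻¹ * c, b⁆ := by
  set W := d * b * c * d * b * d with hW
  set H := a * b * (c * d) * b * a with hH
  have hW' : W = d * b * (d * c) * b * d := by rw [hW, ← hcd.eq]; group
  have hWb : Commute b W := by
    rw [hW']; exact commute_sandwich_of_braid hdb ((Commute.refl d).mul_right hcd.symm)
  have hWc : W * c = d * W := by
    rw [hW']; exact sandwich_mul_of_braid hdb hcb (Commute.refl d) hcd.symm
  have hHb : Commute b H := commute_sandwich_of_braid hab (hac.mul_right had)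
  have hHd : H * d = c * H := sandwich_mul_of_braid hcb hdb hac had
  have haWa : a * W * a = d * H * d :=
    calc a * W * a = (a * d) * (b * (c * d) * b) * (d * a) := by rw [hW]; group
      _ = (d * a) * (b * (c * d) * b) * (a * d) := by rw [had.eq]
      _ = d * H * d := by rw [hH]; group
  have hK : c⁻¹ * W⁻¹ * c⁻¹ * a * W * a = W⁻¹ * H :=
    calc c⁻¹ * W⁻¹ * c⁻¹ * a * W * a = (W * c)⁻¹ * c⁻¹ * (a * W * a) := by group
      _ = (d * W)⁻¹ * c⁻¹ * (d * H * d) := by rw [hWc, haWa]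
      _ = W⁻¹ * (d⁻¹ * c⁻¹ * d) * (H * d) := by group
      _ = W⁻¹ * (c⁻¹ * d⁻¹ * d) * (c * H) := by rw [hHd, ← hcd.inv_inv.eq]
      _ = W⁻¹ * H := by group
  calc ⁅a⁻¹ * W⁻¹ * c⁻¹ * a * W * a, b⁆ = ⁅a⁻¹ * c * (c⁻¹ * W⁻¹ * c⁻¹ * a * W * a), b⁆ := by
        congr 1; group
    _ = ⁅a⁻¹ * c, b⁆ := by
        rw [hK]; exact commutatorElement_mul_of_commute (hWb.inv_right.mul_right hHb).symm

end BraidRelations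

variable {g n : ℕ}

theorem mk_altWord_eq {a b : S g n} (h : a ≠ b) :
    PresentedGroup.mk (artinRels g n ∪ prRels g n) (altWord a b (cox g n a b)) =
      PresentedGroup.mk _ (altWord b a (cox g n a b)) :=
  PresentedGroup.mk_eq_mk_of_mul_inv_mem (Or.inl ⟨a, b, h, rfl⟩)

theorem X_mul_Y_one_mul_X (hg : 1 ≤ g) {k : ℕ} (hk : k ≤ n) :
    X g n k * Y g n 1 * X g n k = Y g n 1 * X g n k * Y g n 1 := by
  have h := mk_altWord_eq (a := Sum.inl ⟨k, by omega⟩)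
    (b := (Sum.inr (Sum.inl ⟨0, by omega⟩) : S g n)) (by simp)
  have hy : 1 ≤ 2 * g - 1 := by omega
  simpa [X, Y, fx, fy, altWord, cox, Nat.lt_succ_of_le hk, hy, mul_assoc] using h

theorem commute_X (j k : ℕ) : Commute (X g n j) (X g n k) := by
  by_cases hjk : j = k
  · rw [hjk]
  by_cases hj : j < n + 1
  · by_cases hk : k < n + 1
    · have h := mk_altWord_eq (a := (Sum.inl ⟨j, hj⟩ : S g n)) (b := Sum.inl ⟨k, hk⟩)
        (by simpa using hjk)
      simpa [Commute, SemiconjBy, X, fx, hj, hk, altWord, cox, hjk] using h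
    · simp [X, fx, hk]
  · simp [X, fx, hj]

theorem B_one : B g n 1 = (X g n (n - 1) * Y g n 1 * X g n (n - 1))⁻¹ * (X g n (n - 1))⁻¹ *
    X g n n * (X g n (n - 1) * Y g n 1 * X g n (n - 1)) := by
  simp [B, deltaList, List.range_succ, mul_assoc]

theorem B_one_eq_commutatorElement_F (hg : 1 ≤ g) {i : ℕ} (hi : i ≤ n) :
    B g n 1 = ⁅F g n i, Y g n 1⁆ := by
  have hab := X_mul_Y_one_mul_X hg (Nat.sub_le n 1)
  have hcb := X_mul_Y_one_mul_X hg (le_refl n)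
  rw [B_one, ← commutatorElement_inv_mul_of_braid hab hcb (commute_X _ _), F]
  split_ifs
  · rfl
  · rw [commutatorElement_inv_mul_conj_of_braid hab hcb (X_mul_Y_one_mul_X hg (by omega))
      (commute_X _ _) (commute_X _ _) (commute_X _ _)]

end LabruereParisP

open LabruereParisP in
theorem relation_PT3_general (g n : ℕ) (hg : 1 ≤ g)
    (i : ℕ) (hi2 : i ≤ n) :
    Y g n 1 * F g n i * (Y g n 1)⁻¹ = (B g n 1)⁻¹ * F g n i := by
  rw [B_one_eq_commutatorElement_F hg hi2, commutatorElement_def]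
  group

open LabruereParisP in
/-- The verification of relation (PT3) in the proof of Proposition 3.3 of
Labruère–Paris: in `PG(g,0,n)`, `y_1F_iy_1⁻¹ = B_1⁻¹F_i` for `1 ≤ i ≤ n`. -/
theorem relation_PT3 (g n : ℕ) (hg : 1 ≤ g) (hn : 1 ≤ n)
    (i : ℕ) (hi1 : 1 ≤ i) (hi2 : i ≤ n) :
    Y g n 1 * F g n i * (Y g n 1)⁻¹ = (B g n 1)⁻¹ * F g n i :=
  relation_PT3_general g n hg i hi2
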